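/- arXiv:2508.18599 — 3 statements merged into one kernel-verified Lean document; each statement's English description precedes it below -/
import Mathlib

section
/- The function f(t) = ∑_{j=1}^n w_j e^{-i t E_j} with w_j ≥ 0, ∑ w_j = 1, and E_j ∈ ℝ is almost periodic in the sense that for every ε > 0 the set of t with |f(t) − 1| < ε is unbounded above. -/
open Filter Topology

/-- The torus `ι → Circle` is a compact group, so `1` is a cluster point of the powers of any of
its elements; pulling a neighbourhood of `1 = ∑ i, w i` back along `u ↦ ∑ i, w i * u i` gives the
recurrence. -/
theorem frequently_norm_sum_mul_pow_sub_one_lt {ι : Type*} [Fintype ι] (z : ι → Circle)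
    (w : ι → ℂ) (hw : ∑ i, w i = 1) {ε : ℝ} (hε : 0 < ε) :
    ∃ᶠ k in atTop, ‖∑ i, w i * (z i : ℂ) ^ k - 1‖ < ε := by
  have hcont : Continuous fun u : ι → Circle ↦ ∑ i, w i * (u i : ℂ) := by fun_prop
  have hnhds : (fun u : ι → Circle ↦ ∑ i, w i * (u i : ℂ)) ⁻¹' Metric.ball 1 ε ∈ 𝓝 1 :=
    hcont.continuousAt.preimage_mem_nhds (by
      simpa only [Pi.one_apply, Circle.coe_one, mul_one, hw] using Metric.ball_mem_nhds 1 hε)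
  simpa [dist_eq_norm] using (mapClusterPt_one_atTop_pow z).frequently hnhds

theorem trig_poly_almost_periodic_general
    (n : ℕ) (E : Fin n → ℝ) (w : Fin n → ℝ)
    (hsum : ∑ j, w j = 1)
    (ε : ℝ) (hε : 0 < ε) (m : ℝ) :
    ∃ t : ℝ, m < t ∧
      ‖(∑ j, (w j : ℂ) * Complex.exp (-(t * E j) * Complex.I)) - 1‖ < ε := by
  obtain ⟨k, hk, hclose⟩ :=
    (frequently_norm_sum_mul_pow_sub_one_lt (fun j ↦ Circle.exp (-E j)) (fun j ↦ (w j : ℂ))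
      (by exact_mod_cast hsum) hε).forall_exists_of_atTop (⌈m⌉₊ + 1)
  refine ⟨k, Nat.lt_of_ceil_lt hk, ?_⟩
  convert hclose using 5 with j
  rw [Circle.coe_exp, ← Complex.exp_nat_mul]
  congr 1
  push_cast
  ring

/-- The trigonometric polynomial `f(t) = ∑_j w_j e^{-itE_j}` with
`w_j ≥ 0`, `∑ w_j = 1` is almost periodic: for every `ε > 0` the set of `t` with
`|f(t) − 1| < ε` is unbounded above. -/
theorem trig_poly_almost_periodic
    (n : ℕ) (E : Fin n → ℝ) (w : Fin n → ℝ)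
    (hw : ∀ j, 0 ≤ w j) (hsum : ∑ j, w j = 1)
    (ε : ℝ) (hε : 0 < ε) (m : ℝ) :
    ∃ t : ℝ, m < t ∧
      ‖(∑ j, (w j : ℂ) * Complex.exp (-(t * E j) * Complex.I)) - 1‖ < ε :=
  trig_poly_almost_periodic_general n E w hsum ε hε m
end

section
/- Let A and C = A + B be bounded operators on a Banach space X with B bounded. Then e^{tC} = ∑_{n=0}^∞ S_n(t) (convergence in operator norm), where S_0(t) = e^{tA} and S_{n+1}(t) = ∫₀^t e^{(t−s)A} B S_n(s) ds. Moreover ‖S_n(t)‖ ≤ e^{|t|·‖A‖} (‖B‖·|t|·e^{‖A‖·|t|})^n / n! for all t ≥ 0 and the series converges absolutely. -/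
/-!
Write `E s = e^{s(A+B)}` and let `V f s = ∫₀^s e^{(s-u)A} B f(u) du`, so that `Sₙ = Vⁿ S₀`.
Duhamel's formula `E = S₀ + V E` (differentiate `u ↦ e^{(t-u)A} e^{u(A+B)}`) iterates, by
linearity of `V`, to `E = S₀ + ⋯ + Sₙ₋₁ + Vⁿ E`. On `[0, t]` the kernel of `V` is bounded by
`‖B‖ e^{‖A‖t}`, so `‖Vⁿ f s‖ ≤ sup ‖f‖ · (‖B‖ s e^{‖A‖t})ⁿ / n!`; this gives the bound on `Sₙ`
and makes the remainder `Vⁿ E` tend to `0`.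
-/

open NormedSpace intervalIntegral

variable {X : Type*} [NormedAddCommGroup X] [NormedSpace ℂ X] [CompleteSpace X]

/-- The terms of the Dyson series: `S 0 t = e^{tA}` and
`S (n+1) t = ∫₀^t e^{(t−s)A} B (S n s) ds`. -/
noncomputable def dysonTerm (A B : X →L[ℂ] X) : ℕ → ℝ → (X →L[ℂ] X)
  | 0, t => exp ((t : ℂ) • A)
  | (n + 1), t => ∫ s in (0 : ℝ)..t, (exp (((t - s : ℝ) : ℂ) • A)) ∘L B ∘L dysonTerm A B n s

noncomputable def volterra (A B : X →L[ℂ] X) (f : ℝ → X →L[ℂ] X) (s : ℝ) : X →L[ℂ] X :=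
  ∫ u in (0 : ℝ)..s, exp (((s - u : ℝ) : ℂ) • A) ∘L B ∘L f u

section Bounds

omit [CompleteSpace X]

variable (A B : X →L[ℂ] X)

theorem dysonTerm_eq_iterate_volterra (n : ℕ) :
    dysonTerm A B n = (volterra A B)^[n] (dysonTerm A B 0) := by
  induction n with
  | zero => rfl
  | succ n ih =>
    rw [Function.iterate_succ_apply', ← ih]
    rfl

theorem ContinuousLinearMap.norm_exp_le_exp_norm (T : X →L[ℂ] X) : ‖exp T‖ ≤ Real.exp ‖T‖ := by
  rw [exp_eq_tsum ℂ, Real.exp_eq_exp_ℝ, exp_eq_tsum ℝ]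
  refine (norm_tsum_le_tsum_norm (norm_expSeries_summable' (𝕂 := ℂ) T)).trans ?_
  refine Summable.tsum_le_tsum (fun n => ?_) (norm_expSeries_summable' (𝕂 := ℂ) T)
    (expSeries_summable' (𝕂 := ℝ) ‖T‖)
  have hpow : ‖T ^ n‖ ≤ ‖T‖ ^ n := by
    rcases Nat.eq_zero_or_pos n with rfl | hn
    · rw [pow_zero, pow_zero]
      exact ContinuousLinearMap.norm_id_le
    · exact norm_pow_le' T hn
  rw [norm_smul, smul_eq_mul, norm_inv, Complex.norm_natCast]
  gcongr

theorem norm_exp_real_smul_le (s : ℝ) : ‖exp ((s : ℂ) • A)‖ ≤ Real.exp (|s| * ‖A‖) := by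
  refine (ContinuousLinearMap.norm_exp_le_exp_norm _).trans (Real.exp_le_exp.mpr ?_)
  rw [norm_smul, Complex.norm_real, Real.norm_eq_abs]

theorem norm_exp_real_smul_le_of_mem_Icc {t : ℝ} :
    ∀ s ∈ Set.Icc 0 t, ‖exp ((s : ℂ) • A)‖ ≤ Real.exp (‖A‖ * t) := by
  intro s hs
  refine (norm_exp_real_smul_le A s).trans (Real.exp_le_exp.mpr ?_)
  rw [abs_of_nonneg hs.1, mul_comm]
  exact mul_le_mul_of_nonneg_left hs.2 (norm_nonneg A)

variable {f : ℝ → X →L[ℂ] X}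

theorem norm_volterra_le_of_norm_le_mul_pow {t c : ℝ} {n : ℕ}
    (hfc : ∀ u ∈ Set.Icc 0 t, ‖f u‖ ≤ c * u ^ n) {s : ℝ} (hs : s ∈ Set.Icc 0 t) :
    ‖volterra A B f s‖ ≤ ‖B‖ * Real.exp (‖A‖ * t) * c * (s ^ (n + 1) / (n + 1)) := by
  have hkernel : ∀ u ∈ Set.Ioc 0 s,
      ‖exp (((s - u : ℝ) : ℂ) • A) ∘L B ∘L f u‖ ≤ ‖B‖ * Real.exp (‖A‖ * t) * c * u ^ n := by
    intro u hu
    have hsu : s - u ∈ Set.Icc 0 t := ⟨by linarith [hu.2], by linarith [hu.1, hs.2]⟩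
    calc ‖exp (((s - u : ℝ) : ℂ) • A) ∘L B ∘L f u‖
        ≤ ‖exp (((s - u : ℝ) : ℂ) • A)‖ * (‖B‖ * ‖f u‖) :=
          (ContinuousLinearMap.opNorm_comp_le _ _).trans
            (by gcongr; exact ContinuousLinearMap.opNorm_comp_le _ _)
      _ ≤ Real.exp (‖A‖ * t) * (‖B‖ * (c * u ^ n)) := by
          gcongr
          · exact norm_exp_real_smul_le_of_mem_Icc A _ hsu
          · exact hfc u ⟨hu.1.le, hu.2.trans hs.2⟩
      _ = ‖B‖ * Real.exp (‖A‖ * t) * c * u ^ n := by ring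
  calc ‖volterra A B f s‖
      ≤ ∫ u in (0 : ℝ)..s, ‖B‖ * Real.exp (‖A‖ * t) * c * u ^ n :=
        norm_integral_le_of_norm_le hs.1 (MeasureTheory.ae_of_all _ hkernel)
          (by apply Continuous.intervalIntegrable; fun_prop)
    _ = ‖B‖ * Real.exp (‖A‖ * t) * c * (s ^ (n + 1) / (n + 1)) := by
        rw [integral_const_mul, integral_pow]
        simp

theorem norm_iterate_volterra_le {t K₀ : ℝ} (hK₀ : ∀ s ∈ Set.Icc 0 t, ‖f s‖ ≤ K₀)
    (n : ℕ) {s : ℝ} (hs : s ∈ Set.Icc 0 t) :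
    ‖(volterra A B)^[n] f s‖ ≤ K₀ * (‖B‖ * s * Real.exp (‖A‖ * t)) ^ n / n.factorial := by
  induction n generalizing s with
  | zero => simpa using hK₀ s hs
  | succ n ih =>
    have hfc : ∀ u ∈ Set.Icc 0 t, ‖(volterra A B)^[n] f u‖
        ≤ K₀ * (‖B‖ * Real.exp (‖A‖ * t)) ^ n / n.factorial * u ^ n := fun u hu =>
      (ih hu).trans_eq (by ring)
    rw [Function.iterate_succ_apply']
    refine (norm_volterra_le_of_norm_le_mul_pow A B hfc hs).trans_eq ?_
    rw [Nat.factorial_succ]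
    push_cast
    field_simp
    ring

end Bounds

section Continuity

variable (A B : X →L[ℂ] X) {f g : ℝ → X →L[ℂ] X}

theorem continuous_exp_real_smul : Continuous fun s : ℝ => exp ((s : ℂ) • A) := by
  let _ : NormedAlgebra ℚ (X →L[ℂ] X) := NormedAlgebra.restrictScalars ℚ ℂ _
  exact exp_continuous.comp (Complex.continuous_ofReal.smul continuous_const)

theorem hasDerivAt_exp_real_smul (s : ℝ) :
    HasDerivAt (fun u : ℝ => exp ((u : ℂ) • A)) (exp ((s : ℂ) • A) * A) s := by
  simpa [Complex.coe_smul] using hasDerivAt_exp_smul_const (𝕂 := ℝ) A s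

theorem hasDerivAt_exp_real_smul' (s : ℝ) :
    HasDerivAt (fun u : ℝ => exp ((u : ℂ) • A)) (A * exp ((s : ℂ) • A)) s := by
  simpa [Complex.coe_smul] using hasDerivAt_exp_smul_const' (𝕂 := ℝ) A s

theorem continuous_volterra_integrand (hf : Continuous f) :
    Continuous fun p : ℝ × ℝ => exp (((p.1 - p.2 : ℝ) : ℂ) • A) ∘L B ∘L f p.2 := by
  simp only [← ContinuousLinearMap.mul_def]
  exact ((continuous_exp_real_smul A).comp (continuous_fst.sub continuous_snd)).mul
    (continuous_const.mul (hf.comp continuous_snd))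

theorem intervalIntegrable_volterra_integrand (hf : Continuous f) (s : ℝ) :
    IntervalIntegrable (fun u => exp (((s - u : ℝ) : ℂ) • A) ∘L B ∘L f u)
      MeasureTheory.volume 0 s :=
  ((continuous_volterra_integrand A B hf).comp (Continuous.prodMk_right s)).intervalIntegrable _ _

theorem continuous_volterra (hf : Continuous f) : Continuous (volterra A B f) :=
  continuous_parametric_intervalIntegral_of_continuous (continuous_volterra_integrand A B hf)
    continuous_id

theorem continuous_iterate_volterra (hf : Continuous f) (n : ℕ) :
    Continuous ((volterra A B)^[n] f) :=
  Function.Iterate.rec _ hf (fun _ => continuous_volterra A B) n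

theorem continuous_dysonTerm (n : ℕ) : Continuous (dysonTerm A B n) := by
  rw [dysonTerm_eq_iterate_volterra]
  exact continuous_iterate_volterra A B (continuous_exp_real_smul A) n

theorem volterra_add (hf : Continuous f) (hg : Continuous g) :
    volterra A B (f + g) = volterra A B f + volterra A B g := by
  funext s
  simp only [volterra, Pi.add_apply, ContinuousLinearMap.comp_add]
  exact integral_add (intervalIntegrable_volterra_integrand A B hf s)
    (intervalIntegrable_volterra_integrand A B hg s)

theorem volterra_finsetSum {ι : Type*} (I : Finset ι) {F : ι → ℝ → X →L[ℂ] X}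
    (hF : ∀ i ∈ I, Continuous (F i)) :
    volterra A B (∑ i ∈ I, F i) = ∑ i ∈ I, volterra A B (F i) := by
  funext s
  simp only [volterra, Finset.sum_apply, ← ContinuousLinearMap.mul_def, Finset.mul_sum]
  exact integral_finsetSum fun i hi => by
    simpa only [← ContinuousLinearMap.mul_def] using
      intervalIntegrable_volterra_integrand A B (hF i hi) s

end Continuity

section Expansion

variable (A B : X →L[ℂ] X)

theorem exp_real_smul_add_eq_add_volterra (t : ℝ) :
    exp ((t : ℂ) • (A + B)) =
      exp ((t : ℂ) • A) + volterra A B (fun s => exp ((s : ℂ) • (A + B))) t := by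
  have hderiv : ∀ u ∈ Set.uIcc (0 : ℝ) t,
      HasDerivAt (fun u : ℝ => exp (((t - u : ℝ) : ℂ) • A) * exp ((u : ℂ) • (A + B)))
        (exp (((t - u : ℝ) : ℂ) • A) ∘L B ∘L exp ((u : ℂ) • (A + B))) u := by
    intro u _
    have hA : HasDerivAt (fun u : ℝ => exp (((t - u : ℝ) : ℂ) • A))
        (-(exp (((t - u : ℝ) : ℂ) • A) * A)) u := by
      simpa only [Function.comp_def, neg_one_smul] using
        (hasDerivAt_exp_real_smul A (t - u)).scomp u ((hasDerivAt_id u).const_sub t)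
    refine (hA.mul (hasDerivAt_exp_real_smul' (A + B) u)).congr_deriv ?_
    simp only [← ContinuousLinearMap.mul_def]
    noncomm_ring
  have hFTC := integral_eq_sub_of_hasDerivAt hderiv
    (intervalIntegrable_volterra_integrand A B (continuous_exp_real_smul (A + B)) t)
  simp only [sub_self, sub_zero, Complex.ofReal_zero, zero_smul, exp_zero, one_mul,
    mul_one] at hFTC
  rw [volterra, hFTC]
  abel

theorem exp_real_smul_add_eq_sum_dysonTerm_add (n : ℕ) :
    (fun s : ℝ => exp ((s : ℂ) • (A + B))) = ∑ k ∈ Finset.range n, dysonTerm A B k +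
      (volterra A B)^[n] (fun s : ℝ => exp ((s : ℂ) • (A + B))) := by
  set E := fun s : ℝ => exp ((s : ℂ) • (A + B))
  have hE : Continuous E := continuous_exp_real_smul (A + B)
  induction n with
  | zero => simp
  | succ n ih =>
    have hsum : Continuous (∑ k ∈ Finset.range n, dysonTerm A B k) := by
      simpa only [← Finset.sum_fn] using
        continuous_finsetSum _ fun k _ => continuous_dysonTerm A B k
    calc E = dysonTerm A B 0 + volterra A B E := funext (exp_real_smul_add_eq_add_volterra A B)
      _ = dysonTerm A B 0 + volterra A B
            (∑ k ∈ Finset.range n, dysonTerm A B k + (volterra A B)^[n] E) :=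
          congrArg (fun g => dysonTerm A B 0 + volterra A B g) ih
      _ = ∑ k ∈ Finset.range (n + 1), dysonTerm A B k + (volterra A B)^[n + 1] E := by
          rw [volterra_add A B hsum (continuous_iterate_volterra A B hE n),
            volterra_finsetSum A B _ fun k _ => continuous_dysonTerm A B k,
            Finset.sum_range_succ', Function.iterate_succ_apply']
          simp only [dysonTerm_eq_iterate_volterra A B (_ + 1), Function.iterate_succ_apply',
            ← dysonTerm_eq_iterate_volterra]
          abel

theorem norm_exp_real_smul_add_sub_sum_dysonTerm_le {t : ℝ} (ht : 0 ≤ t) (n : ℕ) :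
    ‖exp ((t : ℂ) • (A + B)) - ∑ k ∈ Finset.range n, dysonTerm A B k t‖
      ≤ Real.exp (‖A + B‖ * t) * ((‖B‖ * t * Real.exp (‖A‖ * t)) ^ n / n.factorial) := by
  have hexpand := congrFun (exp_real_smul_add_eq_sum_dysonTerm_add A B n) t
  rw [Pi.add_apply, Finset.sum_apply] at hexpand
  rw [hexpand, add_sub_cancel_left, ← mul_div_assoc]
  exact norm_iterate_volterra_le A B (norm_exp_real_smul_le_of_mem_Icc (A + B)) n ⟨ht, le_rfl⟩

end Expansion

/-- For bounded operators `A`, `B` on a Banach space and `C = A + B`,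
the Dyson series `∑ₙ Sₙ(t)` converges in operator norm to `e^{tC}`, with
`‖Sₙ(t)‖ ≤ e^{|t|‖A‖}(‖B‖|t|e^{‖A‖|t|})ⁿ/n!` for `t ≥ 0`, and the series converges
absolutely. -/
theorem dyson_series_expansion (A B : X →L[ℂ] X) (t : ℝ) (ht : 0 ≤ t) :
    HasSum (fun n => dysonTerm A B n t) (exp ((t : ℂ) • (A + B))) ∧
    (∀ n : ℕ, ‖dysonTerm A B n t‖ ≤
      Real.exp (|t| * ‖A‖) * (‖B‖ * |t| * Real.exp (‖A‖ * |t|)) ^ n / n.factorial) ∧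
    Summable (fun n => ‖dysonTerm A B n t‖) := by
  have hbound : ∀ n : ℕ, ‖dysonTerm A B n t‖ ≤
      Real.exp (|t| * ‖A‖) * (‖B‖ * |t| * Real.exp (‖A‖ * |t|)) ^ n / n.factorial := by
    intro n
    rw [abs_of_nonneg ht, mul_comm t, dysonTerm_eq_iterate_volterra]
    exact norm_iterate_volterra_le A B (norm_exp_real_smul_le_of_mem_Icc A) n ⟨ht, le_rfl⟩
  have hsummable : Summable (fun n => ‖dysonTerm A B n t‖) :=
    .of_nonneg_of_le (fun n => norm_nonneg _) hbound <| by
      simpa only [mul_div_assoc] using (Real.summable_pow_div_factorial _).mul_left _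
  have htendsto : Filter.Tendsto (fun n => ∑ k ∈ Finset.range n, dysonTerm A B k t)
      Filter.atTop (nhds (exp ((t : ℂ) • (A + B)))) := by
    rw [tendsto_iff_norm_sub_tendsto_zero]
    refine squeeze_zero (fun n => norm_nonneg _) (fun n => (norm_sub_rev _ _).trans_le
      (norm_exp_real_smul_add_sub_sum_dysonTerm_le A B ht n)) ?_
    simpa using (FloorSemiring.tendsto_pow_div_factorial_atTop
      (‖B‖ * t * Real.exp (‖A‖ * t))).const_mul (Real.exp (‖A + B‖ * t))
  exact ⟨(hasSum_iff_tendsto_nat_of_summable_norm hsummable).mpr htendsto, hbound, hsummable⟩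
end

section
/- Let V : ℕ → ℝ be a bounded potential and W : ℕ → ℝ agree with V on {1,…,N}. Fix M, T > 0 and suppose t₁,…,t_k ∈ (0,T] are times such that for every λ ∈ [−M,M] there is i with |⟨δ₁, e^{-it_i H_{V,λ}}δ₁⟩| ≥ 1/2, where H_{V,λ} = Δ + λ⟨δ₁,·⟩δ₁ + V. If 2 ∑_{m≥N} ((2+M)T)^m/m! < ε, then for every λ ∈ [−M,M] there is i with |⟨δ₁, e^{-it_i H_{W,λ}}δ₁⟩| ≥ 1/2 − ε. -/
open NormedSpace

noncomputable section

/-- The Hilbert space `ℓ²(ℕ)` (sites of the paper are indexed here from `0`,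
so agreement of `V` and `W` on the first `N` sites reads `∀ n < N, V n = W n`). -/
abbrev ℓ2 : Type := lp (fun _ : ℕ => ℂ) 2

/-- The indicator `δ₁` of the first site (index `0`). -/
def δ₁ : ℓ2 := lp.single 2 0 1

/-- `Δ` is the discrete Laplacian on `ℓ²(ℕ)` with Dirichlet boundary condition. -/
def IsDirichletLaplacian (Δ : ℓ2 →L[ℂ] ℓ2) : Prop :=
  ∀ ψ : ℓ2, (Δ ψ) 0 = ψ 1 ∧ ∀ n : ℕ, (Δ ψ) (n + 1) = ψ n + ψ (n + 2)

/-- `MV` is the operator of multiplication by the potential `V`. -/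
def IsMulBy (V : ℕ → ℝ) (MV : ℓ2 →L[ℂ] ℓ2) : Prop :=
  ∀ (ψ : ℓ2) (n : ℕ), (MV ψ) n = (V n : ℂ) * ψ n

/-- `B` is the rank-one operator `⟨δ₁,·⟩δ₁`. -/
def IsRankOneDelta (B : ℓ2 →L[ℂ] ℓ2) : Prop :=
  ∀ ψ : ℓ2, B ψ = (inner ℂ δ₁ ψ : ℂ) • δ₁

/-!
Cutting the hopping term of `Δ` between the sites `n` and `n + 1 = N` turns `H = Δ + V` into a
Hamiltonian `H'` that leaves `ℓ²({0, …, n})` invariant and only sees `V` there, so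
`e^{-itH'_V} δ₁ = e^{-itH'_W} δ₁`. Duhamel's formula bounds `‖e^{-itH} δ₁ - e^{-itH'} δ₁‖` by
`∫₀ᵗ |ψ_s(n)| ds` with `ψ_s = e^{-isH'} δ₁`, and iterating the integrated coordinate equations
`i ψ_j' = ψ_{j-1} + ψ_{j+1} + V_j ψ_j` gives `|ψ_s(j)| ≤ ∑_{m ≥ j} (2s)^m / m!`. Hence the two
amplitudes differ by at most `∑_{m ≥ N} (2t)^m / m!`; the rank-one coupling `λ⟨δ₁, ·⟩δ₁` is
absorbed into the potential at site `0`.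
-/

open Complex (I)

lemma norm_sub_le_integral_of_hasDerivAt {E : Type*} [NormedAddCommGroup E] [NormedSpace ℝ E]
    {f f' : ℝ → E} {B : ℝ → ℝ} {a b : ℝ} (hab : a ≤ b) (hf : ∀ t, HasDerivAt f (f' t) t)
    (hB : ∀ t ∈ Set.Icc a b, ‖f' t‖ ≤ B t) (hBi : IntervalIntegrable B MeasureTheory.volume a b) :
    ‖f b - f a‖ ≤ ∫ t in a..b, B t :=
  norm_sub_le_integral_of_norm_deriv_le_of_le hab
    (fun t _ => (hf t).continuousAt.continuousWithinAt)
    (fun t _ => (hf t).differentiableAt.differentiableWithinAt)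
    (Filter.Eventually.of_forall fun t ht => (hf t).deriv ▸ hB t (Set.Ioo_subset_Icc_self ht)) hBi

lemma norm_le_norm_zero_add_integral {c b : ℝ → ℂ} {d : ℝ}
    (hc : ∀ s, HasDerivAt c (-I * (d * c s + b s)) s) (hb : Continuous b) {σ : ℝ}
    (hσ : 0 ≤ σ) : ‖c σ‖ ≤ ‖c 0‖ + ∫ s in (0 : ℝ)..σ, ‖b s‖ := by
  -- the phase `e^{ids}` removes the diagonal term from the equation
  set z : ℝ → ℂ := fun s => Complex.exp (I * d * s) * c s
  have hphase : ∀ s : ℝ, ‖Complex.exp (I * d * s)‖ = 1 := fun s => by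
    simp [Complex.norm_exp]
  have hz : ∀ s : ℝ, HasDerivAt z (Complex.exp (I * d * s) * (-I * b s)) s := by
    intro s
    have he := (((hasDerivAt_id' (s : ℂ)).const_mul (I * d)).cexp).comp_ofReal
    exact (he.mul (hc s)).congr_deriv (by ring)
  have hnorm : ∀ s, ‖z s‖ = ‖c s‖ := fun s => by simp [z, hphase]
  calc ‖c σ‖ = ‖z 0 + (z σ - z 0)‖ := by rw [add_sub_cancel, hnorm]
    _ ≤ ‖z 0‖ + ‖z σ - z 0‖ := norm_add_le _ _
    _ ≤ ‖c 0‖ + ∫ s in (0 : ℝ)..σ, ‖b s‖ := by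
      rw [hnorm]
      gcongr
      exact norm_sub_le_integral_of_hasDerivAt hσ hz (fun s _ => by simp [hphase])
        (hb.norm.intervalIntegrable _ _)

def expTail (N : ℕ) (x : ℝ) : ℝ := ∑' m : {m : ℕ // N ≤ m}, x ^ (m : ℕ) / (m : ℕ).factorial

lemma expTail_eq_exp_sub_sum (N : ℕ) (x : ℝ) :
    expTail N x = Real.exp x - ∑ m ∈ Finset.range N, x ^ m / m.factorial := by
  rw [eq_sub_iff_add_eq', Real.exp_eq_exp_ℝ, ← (expSeries_div_hasSum_exp x).tsum_eq,
    ← (Real.summable_pow_div_factorial x).sum_add_tsum_compl (s := Finset.range N)]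
  congr 1
  exact tsum_congr_set_coe (fun m : ℕ => x ^ m / m.factorial) (s := Set.Ici N) (by ext; simp)

lemma expTail_zero_left : expTail 0 = Real.exp := by
  funext x
  simp [expTail_eq_exp_sub_sum]

lemma expTail_succ (N : ℕ) (x : ℝ) : expTail (N + 1) x = expTail N x - x ^ N / N.factorial := by
  simp only [expTail_eq_exp_sub_sum, Finset.sum_range_succ]
  ring

lemma expTail_zero_right (N : ℕ) : expTail N 0 = if N = 0 then 1 else 0 := by
  cases N with
  | zero => simp [expTail_zero_left]
  | succ N => simp [expTail_eq_exp_sub_sum, Finset.sum_range_succ']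

lemma expTail_nonneg (N : ℕ) {x : ℝ} (hx : 0 ≤ x) : 0 ≤ expTail N x :=
  tsum_nonneg fun _ => by positivity

lemma expTail_le_expTail {N : ℕ} {x y : ℝ} (hx : 0 ≤ x) (hxy : x ≤ y) :
    expTail N x ≤ expTail N y :=
  (Real.summable_pow_div_factorial x).subtype _ |>.tsum_le_tsum
    (fun _ => by gcongr) ((Real.summable_pow_div_factorial y).subtype _)

lemma expTail_antitone {x : ℝ} (hx : 0 ≤ x) : Antitone (expTail · x) :=
  antitone_nat_of_succ_le fun N => by
    rw [expTail_succ]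
    have : 0 ≤ x ^ N / N.factorial := by positivity
    linarith

lemma hasDerivAt_pow_div_factorial (N : ℕ) (x : ℝ) :
    HasDerivAt (fun y : ℝ => y ^ (N + 1) / (N + 1).factorial) (x ^ N / N.factorial) x := by
  refine ((hasDerivAt_pow (N + 1) x).div_const _).congr_deriv ?_
  rw [Nat.factorial_succ]
  push_cast
  field_simp

lemma hasDerivAt_expTail_succ (N : ℕ) (x : ℝ) :
    HasDerivAt (expTail (N + 1)) (expTail N x) x := by
  induction N generalizing x with
  | zero =>
    have h : expTail 1 = fun y => Real.exp y - 1 := by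
      funext y; simp [expTail_succ, expTail_zero_left]
    rw [h, expTail_zero_left]
    exact (Real.hasDerivAt_exp x).sub_const 1
  | succ N ih =>
    have h : expTail (N + 2) = fun y => expTail (N + 1) y - y ^ (N + 1) / (N + 1).factorial := by
      funext y; exact expTail_succ _ _
    rw [h, expTail_succ]
    exact (ih x).sub (hasDerivAt_pow_div_factorial N x)

-- At `N = 0` this reads `exp' = exp`, since `0 - 1 = 0` in `ℕ`.
lemma hasDerivAt_expTail (N : ℕ) (x : ℝ) : HasDerivAt (expTail N) (expTail (N - 1) x) x := by
  cases N with
  | zero => simpa [expTail_zero_left] using Real.hasDerivAt_exp x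
  | succ N => exact hasDerivAt_expTail_succ N x

@[fun_prop]
lemma continuous_expTail (N : ℕ) : Continuous (expTail N) :=
  continuous_iff_continuousAt.2 fun x => (hasDerivAt_expTail N x).continuousAt

lemma integral_two_mul_comp_two_mul {F f : ℝ → ℝ} (hF : ∀ x, HasDerivAt F (f x) x)
    (hf : Continuous f) (σ : ℝ) : ∫ s in (0 : ℝ)..σ, 2 * f (2 * s) = F (2 * σ) - F 0 := by
  have hderiv : ∀ s, HasDerivAt (fun s => F (2 * s)) (2 * f (2 * s)) s := fun s =>
    ((hF (2 * s)).comp s ((hasDerivAt_id s).const_mul 2)).congr_deriv (by ring)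
  rw [intervalIntegral.integral_eq_sub_of_hasDerivAt (fun s _ => hderiv s)
    ((continuous_const.mul (hf.comp (continuous_const.mul continuous_id))).intervalIntegrable _ _),
    mul_zero]

lemma integral_two_mul_expTail (N : ℕ) (σ : ℝ) :
    ∫ s in (0 : ℝ)..σ, 2 * expTail (N - 1) (2 * s) = expTail N (2 * σ) - expTail N 0 :=
  integral_two_mul_comp_two_mul (hasDerivAt_expTail N) (continuous_expTail _) σ

lemma integral_two_mul_pow_div_factorial (k : ℕ) (σ : ℝ) :
    ∫ s in (0 : ℝ)..σ, 2 * ((2 * s) ^ k / k.factorial) = (2 * σ) ^ (k + 1) / (k + 1).factorial := by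
  rw [integral_two_mul_comp_two_mul (hasDerivAt_pow_div_factorial k) (by fun_prop) σ]
  simp

theorem le_expTail_of_le_integral {f : ℕ → ℝ → ℝ} (hf : ∀ j, Continuous (f j))
    (hf_le_one : ∀ j s, 0 ≤ s → f j s ≤ 1)
    (hf_le : ∀ j σ, 0 ≤ σ →
      f j σ ≤ (if j = 0 then 1 else 0) + ∫ s in (0 : ℝ)..σ, (f (j - 1) s + f (j + 1) s))
    (j : ℕ) {σ : ℝ} (hσ : 0 ≤ σ) : f j σ ≤ expTail j (2 * σ) := by
  have key : ∀ k j σ, 0 ≤ σ → f j σ ≤ expTail j (2 * σ) + (2 * σ) ^ k / k.factorial := by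
    intro k
    induction k with
    | zero =>
      intro j σ hσ
      have := expTail_nonneg j (by positivity : 0 ≤ 2 * σ)
      simp only [pow_zero, Nat.factorial_zero, Nat.cast_one, div_one]
      linarith [hf_le_one j σ hσ]
    | succ k ih =>
      intro j σ hσ
      have hpt : ∀ s ∈ Set.Icc 0 σ, f (j - 1) s + f (j + 1) s
          ≤ 2 * expTail (j - 1) (2 * s) + 2 * ((2 * s) ^ k / k.factorial) := by
        intro s hs
        have h2s : 0 ≤ 2 * s := by linarith [hs.1]
        have := expTail_antitone h2s (show j - 1 ≤ j + 1 by omega)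
        linarith [ih (j - 1) s hs.1, ih (j + 1) s hs.1]
      have hint : ∫ s in (0 : ℝ)..σ, (f (j - 1) s + f (j + 1) s)
          ≤ ∫ s in (0 : ℝ)..σ, (2 * expTail (j - 1) (2 * s) + 2 * ((2 * s) ^ k / k.factorial)) :=
        intervalIntegral.integral_mono_on hσ (((hf _).add (hf _)).intervalIntegrable _ _)
          (Continuous.intervalIntegrable (by fun_prop) _ _) hpt
      rw [intervalIntegral.integral_add (f := fun s => 2 * expTail (j - 1) (2 * s))
        (Continuous.intervalIntegrable (by fun_prop) _ _)
        (Continuous.intervalIntegrable (by fun_prop) _ _), integral_two_mul_expTail,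
        integral_two_mul_pow_div_factorial, expTail_zero_right] at hint
      have := hf_le j σ hσ
      split_ifs at hint this <;> linarith
  have hlim := (tendsto_const_nhds (x := expTail j (2 * σ))).add
    (FloorSemiring.tendsto_pow_div_factorial_atTop (2 * σ))
  rw [add_zero] at hlim
  exact ge_of_tendsto' hlim (fun k => key k j σ hσ)

section TimeEvolution

variable {E : Type*} [NormedAddCommGroup E] [InnerProductSpace ℂ E] [CompleteSpace E]

def timeEvolution (H : E →L[ℂ] E) (t : ℝ) : E →L[ℂ] E := exp ((-(t : ℂ) * I) • H)

lemma timeEvolution_eq_exp_smul (H : E →L[ℂ] E) (t : ℝ) :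
    timeEvolution H t = exp ((t : ℂ) • (-I • H)) := by
  rw [timeEvolution, smul_smul, neg_mul, mul_neg]

@[simp]
lemma timeEvolution_zero (H : E →L[ℂ] E) : timeEvolution H 0 = 1 := by
  simp [timeEvolution]

lemma hasDerivAt_timeEvolution (H : E →L[ℂ] E) (t : ℝ) :
    HasDerivAt (timeEvolution H) (timeEvolution H t * (-I • H)) t := by
  simp only [funext (timeEvolution_eq_exp_smul H)]
  simpa [Function.comp_def] using (hasDerivAt_exp_smul_const (-I • H) (t : ℂ)).scomp t
    Complex.ofRealCLM.hasDerivAt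

lemma hasDerivAt_timeEvolution' (H : E →L[ℂ] E) (t : ℝ) :
    HasDerivAt (timeEvolution H) ((-I • H) * timeEvolution H t) t := by
  simp only [funext (timeEvolution_eq_exp_smul H)]
  simpa [Function.comp_def] using (hasDerivAt_exp_smul_const' (-I • H) (t : ℂ)).scomp t
    Complex.ofRealCLM.hasDerivAt

lemma hasDerivAt_timeEvolution_apply (H : E →L[ℂ] E) (x : E) (t : ℝ) :
    HasDerivAt (fun t => timeEvolution H t x) (-I • H (timeEvolution H t x)) t :=
  ((ContinuousLinearMap.apply ℂ E x).restrictScalars ℝ).hasFDerivAt.comp_hasDerivAt t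
    (hasDerivAt_timeEvolution' H t)

lemma continuous_timeEvolution_apply (H : E →L[ℂ] E) (x : E) :
    Continuous fun t => timeEvolution H t x :=
  continuous_iff_continuousAt.2 fun t => (hasDerivAt_timeEvolution_apply H x t).continuousAt

lemma timeEvolution_mem_unitary {H : E →L[ℂ] E} (hH : IsSelfAdjoint H) (t : ℝ) :
    timeEvolution H t ∈ unitary (E →L[ℂ] E) :=
  letI : NormedAlgebra ℚ (E →L[ℂ] E) := .restrictScalars ℚ ℂ _
  exp_mem_unitary_of_mem_skewAdjoint (hH.smul_mem_skewAdjoint (by simp [skewAdjoint.mem_iff]))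

lemma norm_timeEvolution_apply {H : E →L[ℂ] E} (hH : IsSelfAdjoint H) (t : ℝ) (x : E) :
    ‖timeEvolution H t x‖ = ‖x‖ :=
  ContinuousLinearMap.norm_map_of_mem_unitary (timeEvolution_mem_unitary hH t) x

lemma norm_timeEvolution_apply_sub_le {H₁ H₂ : E →L[ℂ] E} (hH₁ : IsSelfAdjoint H₁) (x : E)
    {t : ℝ} (ht : 0 ≤ t) :
    ‖timeEvolution H₁ t x - timeEvolution H₂ t x‖
      ≤ ∫ s in (0 : ℝ)..t, ‖(H₁ - H₂) (timeEvolution H₂ s x)‖ := by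
  set F : ℝ → E := fun s => timeEvolution H₁ (t - s) (timeEvolution H₂ s x)
  have hF : ∀ s, HasDerivAt F
      (timeEvolution H₁ (t - s) ((I • (H₁ - H₂)) (timeEvolution H₂ s x))) s := by
    intro s
    have h₁ := (hasDerivAt_timeEvolution H₁ (t - s)).scomp s ((hasDerivAt_id s).const_sub t)
    have hG := h₁.mul (hasDerivAt_timeEvolution' H₂ s)
    refine (((ContinuousLinearMap.apply ℂ E x).restrictScalars ℝ).hasFDerivAt.comp_hasDerivAt s
      hG).congr_deriv ?_
    simp [sub_eq_add_neg]
  have hFt : F t = timeEvolution H₂ t x := by simp [F]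
  have hF0 : F 0 = timeEvolution H₁ t x := by simp [F]
  rw [norm_sub_rev, ← hFt, ← hF0]
  refine norm_sub_le_integral_of_hasDerivAt ht hF (fun s _ => ?_)
    (((H₁ - H₂).continuous.comp (continuous_timeEvolution_apply H₂ x)).norm.intervalIntegrable _ _)
  rw [norm_timeEvolution_apply hH₁, smul_apply, norm_smul, Complex.norm_I, one_mul]

end TimeEvolution

section InvariantSubspace

variable {𝕜 E : Type*} [RCLike 𝕜] [NormedAddCommGroup E] [NormedSpace 𝕜 E]
  {K L : E →L[𝕜] E} {p : Submodule 𝕜 E}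

lemma pow_apply_mem_and_eq (hK : ∀ x ∈ p, K x ∈ p) (hKL : ∀ x ∈ p, K x = L x) {x : E}
    (hx : x ∈ p) (m : ℕ) : (K ^ m) x ∈ p ∧ (K ^ m) x = (L ^ m) x := by
  induction m with
  | zero => exact ⟨hx, rfl⟩
  | succ m ih =>
    rw [pow_succ', pow_succ', mul_apply_eq_comp, mul_apply_eq_comp, ← ih.2,
      ← hKL _ ih.1]
    exact ⟨hK _ ih.1, rfl⟩

variable [CompleteSpace E]

lemma hasSum_exp_apply (K : E →L[𝕜] E) (x : E) :
    HasSum (fun m => (m.factorial⁻¹ : 𝕜) • (K ^ m) x) (exp K x) :=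
  (exp_series_hasSum_exp' (𝕂 := 𝕜) K).mapL (ContinuousLinearMap.apply 𝕜 E x)

lemma exp_apply_mem (hp : IsClosed (p : Set E)) (hK : ∀ x ∈ p, K x ∈ p) {x : E} (hx : x ∈ p) :
    exp K x ∈ p :=
  hp.mem_of_tendsto (hasSum_exp_apply K x) (Filter.Eventually.of_forall fun _ =>
    p.sum_mem fun m _ => p.smul_mem _ (pow_apply_mem_and_eq hK (fun _ _ => rfl) hx m).1)

lemma exp_apply_eq_of_eqOn (hK : ∀ x ∈ p, K x ∈ p) (hKL : ∀ x ∈ p, K x = L x) {x : E}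
    (hx : x ∈ p) : exp K x = exp L x := by
  refine (hasSum_exp_apply K x).unique ?_
  simpa only [(pow_apply_mem_and_eq hK hKL hx _).2] using hasSum_exp_apply L x

end InvariantSubspace

lemma δ₁_apply (j : ℕ) : δ₁ j = if j = 0 then 1 else 0 := by
  simp [δ₁, Pi.single_apply]

lemma norm_δ₁ : ‖δ₁‖ = 1 := by
  simp [δ₁, lp.norm_single]

lemma continuous_ℓ2_apply (j : ℕ) : Continuous fun ψ : ℓ2 => ψ j :=
  (lp.evalCLM ℂ (fun _ : ℕ => ℂ) 2 j).continuous

lemma summable_norm_sq (ψ : ℓ2) : Summable fun n => ‖ψ n‖ ^ 2 := by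
  simpa using (lp.hasSum_norm (p := 2) (by norm_num) ψ).summable

lemma summable_inner_of_summable_norm_sq {f g : ℕ → ℂ} (hf : Summable fun n => ‖f n‖ ^ 2)
    (hg : Summable fun n => ‖g n‖ ^ 2) : Summable fun n => inner ℂ (f n) (g n) :=
  .of_norm_bounded (hf.add hg) fun n => (norm_inner_le_norm _ _).trans <| by
    nlinarith [sq_nonneg (‖f n‖ - ‖g n‖), norm_nonneg (f n), norm_nonneg (g n)]

lemma hasSum_of_succ {c u v : ℕ → ℂ} {a b : ℂ} (hu : HasSum u a) (hv : HasSum v b)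
    (h0 : c 0 = u 0) (hsucc : ∀ n, c (n + 1) = v n + u (n + 1)) : HasSum c (a + b) := by
  have h := hv.add ((hasSum_nat_add_iff' 1).2 hu)
  rw [← hasSum_nat_add_iff' 1, Finset.sum_range_one, h0,
    show a + b - u 0 = b + (a - ∑ i ∈ Finset.range 1, u i) by rw [Finset.sum_range_one]; ring]
  simpa only [hsucc] using h

lemma IsDirichletLaplacian.isSelfAdjoint {Δ : ℓ2 →L[ℂ] ℓ2} (hΔ : IsDirichletLaplacian Δ) :
    IsSelfAdjoint Δ := by
  rw [ContinuousLinearMap.isSelfAdjoint_iff_isSymmetric]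
  intro ψ φ
  have hψ := summable_norm_sq ψ
  have hφ := summable_norm_sq φ
  have hψ' := (summable_nat_add_iff 1).2 hψ
  have hφ' := (summable_nat_add_iff 1).2 hφ
  have ha := (summable_inner_of_summable_norm_sq hψ hφ').hasSum
  have hb := (summable_inner_of_summable_norm_sq hψ' hφ).hasSum
  have hleft := hasSum_of_succ hb ha (c := fun n => inner ℂ ((Δ ψ) n) (φ n))
    (by simp [(hΔ ψ).1]) (fun n => by simp only [(hΔ ψ).2 n, inner_add_left])
  have hright := hasSum_of_succ ha hb (c := fun n => inner ℂ (ψ n) ((Δ φ) n))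
    (by simp [(hΔ φ).1]) (fun n => by simp only [(hΔ φ).2 n, inner_add_right])
  simp only [ContinuousLinearMap.coe_coe]
  rw [(lp.hasSum_inner _ _).unique hleft, (lp.hasSum_inner _ _).unique hright, add_comm]

lemma IsMulBy.isSelfAdjoint {V : ℕ → ℝ} {MV : ℓ2 →L[ℂ] ℓ2} (hMV : IsMulBy V MV) :
    IsSelfAdjoint MV := by
  rw [ContinuousLinearMap.isSelfAdjoint_iff_isSymmetric]
  intro ψ φ
  simp only [ContinuousLinearMap.coe_coe, lp.inner_eq_tsum]
  exact tsum_congr fun n => by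
    rw [hMV, hMV, RCLike.inner_apply', RCLike.inner_apply', map_mul, Complex.conj_ofReal]
    ring

section Decoupling

def bondHopping (n : ℕ) : ℓ2 →L[ℂ] ℓ2 :=
  InnerProductSpace.rankOne ℂ (lp.single 2 n 1 : ℓ2) (lp.single 2 (n + 1) 1 : ℓ2)
    + InnerProductSpace.rankOne ℂ (lp.single 2 (n + 1) 1 : ℓ2) (lp.single 2 n 1 : ℓ2)

lemma isSelfAdjoint_bondHopping (n : ℕ) : IsSelfAdjoint (bondHopping n) := by
  simp [IsSelfAdjoint, bondHopping, ContinuousLinearMap.star_eq_adjoint, add_comm]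

lemma bondHopping_apply (n : ℕ) (ψ : ℓ2) (j : ℕ) :
    bondHopping n ψ j = (if j = n then ψ (n + 1) else 0) + (if j = n + 1 then ψ n else 0) := by
  rw [bondHopping, add_apply, InnerProductSpace.rankOne_apply, InnerProductSpace.rankOne_apply,
    lp.inner_single_left, lp.inner_single_left, lp.coeFn_add, lp.coeFn_smul, lp.coeFn_smul]
  simp [Pi.single_apply]

def supportedUpTo (n : ℕ) : Submodule ℂ ℓ2 where
  carrier := {ψ | ∀ j, n < j → ψ j = 0}
  add_mem' hψ hφ j hj := by simp [hψ j hj, hφ j hj]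
  zero_mem' _ _ := rfl
  smul_mem' c ψ hψ j hj := by simp [hψ j hj]

lemma isClosed_supportedUpTo (n : ℕ) : IsClosed (supportedUpTo n : Set ℓ2) := by
  simp only [supportedUpTo, Submodule.coe_set_mk, AddSubmonoid.coe_set_mk,
    AddSubsemigroup.coe_set_mk, Set.ofPred_forall]
  exact isClosed_iInter fun j => isClosed_iInter fun _ =>
    isClosed_eq (continuous_ℓ2_apply j) continuous_const

lemma δ₁_mem_supportedUpTo (n : ℕ) : δ₁ ∈ supportedUpTo n := fun j hj => by
  simp [δ₁_apply, show j ≠ 0 by omega]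

lemma norm_bondHopping_apply {n : ℕ} {ψ : ℓ2} (hψ : ψ ∈ supportedUpTo n) :
    ‖bondHopping n ψ‖ = ‖ψ n‖ := by
  simp [bondHopping, lp.inner_single_left, hψ (n + 1) n.lt_succ_self, norm_smul, lp.norm_single]

variable {Δ : ℓ2 →L[ℂ] ℓ2} {V W : ℕ → ℝ} {MV MW : ℓ2 →L[ℂ] ℓ2}

-- At `j = 0` the term `‖ψ (j - 1)‖ = ‖ψ 0‖` is superfluous, since `0 - 1 = 0` in `ℕ`.
lemma IsDirichletLaplacian.norm_apply_le (hΔ : IsDirichletLaplacian Δ) (ψ : ℓ2) (j : ℕ) :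
    ‖Δ ψ j‖ ≤ ‖ψ (j - 1)‖ + ‖ψ (j + 1)‖ := by
  cases j with
  | zero => simp [(hΔ ψ).1]
  | succ m => simpa [(hΔ ψ).2 m] using norm_add_le (ψ m) (ψ (m + 2))

lemma decoupled_apply_of_le (hMV : IsMulBy V MV) {n : ℕ}
    {ψ : ℓ2} (hψ : ψ ∈ supportedUpTo n) {j : ℕ} (hj : j ≤ n) :
    (Δ + MV - bondHopping n) ψ j = Δ ψ j + V j * ψ j := by
  have hn : ψ (n + 1) = 0 := hψ _ n.lt_succ_self
  simp [bondHopping_apply, hMV ψ, hn, show j ≠ n + 1 by omega]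

lemma decoupled_apply_of_lt (hΔ : IsDirichletLaplacian Δ) (hMV : IsMulBy V MV) {n : ℕ}
    {ψ : ℓ2} (hψ : ψ ∈ supportedUpTo n) {j : ℕ} (hj : n < j) :
    (Δ + MV - bondHopping n) ψ j = 0 := by
  obtain ⟨m, rfl⟩ : ∃ m, j = m + 1 := ⟨j - 1, by omega⟩
  have h1 : ψ (m + 1) = 0 := hψ _ hj
  have h2 : ψ (m + 2) = 0 := hψ _ (by omega)
  rcases (Nat.lt_succ_iff.1 hj).eq_or_lt with rfl | hlt
  · simp [bondHopping_apply, hMV ψ, (hΔ ψ).2, h1, h2]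
  · simp [bondHopping_apply, hMV ψ, (hΔ ψ).2, h1, h2, hψ m hlt, show m ≠ n by omega,
      show m + 1 ≠ n by omega]

lemma decoupled_mem_supportedUpTo (hΔ : IsDirichletLaplacian Δ) (hMV : IsMulBy V MV) {n : ℕ}
    {ψ : ℓ2} (hψ : ψ ∈ supportedUpTo n) : (Δ + MV - bondHopping n) ψ ∈ supportedUpTo n :=
  fun _ hj => decoupled_apply_of_lt hΔ hMV hψ hj

lemma decoupled_apply_eq (hΔ : IsDirichletLaplacian Δ) (hMV : IsMulBy V MV)
    (hMW : IsMulBy W MW) {n : ℕ} (hVW : ∀ j ≤ n, V j = W j) {ψ : ℓ2} (hψ : ψ ∈ supportedUpTo n) :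
    (Δ + MV - bondHopping n) ψ = (Δ + MW - bondHopping n) ψ := by
  ext j
  rcases le_or_gt j n with hj | hj
  · rw [decoupled_apply_of_le hMV hψ hj, decoupled_apply_of_le hMW hψ hj, hVW j hj]
  · rw [decoupled_apply_of_lt hΔ hMV hψ hj, decoupled_apply_of_lt hΔ hMW hψ hj]

lemma timeEvolution_decoupled_apply_mem (hΔ : IsDirichletLaplacian Δ) (hMV : IsMulBy V MV)
    (n : ℕ) (t : ℝ) : timeEvolution (Δ + MV - bondHopping n) t δ₁ ∈ supportedUpTo n :=
  exp_apply_mem (isClosed_supportedUpTo n)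
    (fun _ hψ => Submodule.smul_mem _ _ (decoupled_mem_supportedUpTo hΔ hMV hψ))
    (δ₁_mem_supportedUpTo n)

lemma timeEvolution_decoupled_apply_eq (hΔ : IsDirichletLaplacian Δ) (hMV : IsMulBy V MV)
    (hMW : IsMulBy W MW) {n : ℕ} (hVW : ∀ j ≤ n, V j = W j) (t : ℝ) :
    timeEvolution (Δ + MV - bondHopping n) t δ₁ = timeEvolution (Δ + MW - bondHopping n) t δ₁ :=
  exp_apply_eq_of_eqOn
    (fun _ hψ => Submodule.smul_mem _ _ (decoupled_mem_supportedUpTo hΔ hMV hψ))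
    (fun _ hψ => by simp only [smul_apply, decoupled_apply_eq hΔ hMV hMW hVW hψ])
    (δ₁_mem_supportedUpTo n)

lemma hasDerivAt_timeEvolution_decoupled_apply (hΔ : IsDirichletLaplacian Δ)
    (hMV : IsMulBy V MV) {n j : ℕ} (hj : j ≤ n) (s : ℝ) :
    HasDerivAt (fun s => timeEvolution (Δ + MV - bondHopping n) s δ₁ j)
      (-I * (V j * timeEvolution (Δ + MV - bondHopping n) s δ₁ j
        + Δ (timeEvolution (Δ + MV - bondHopping n) s δ₁) j)) s := by
  have h := ((lp.evalCLM ℂ (fun _ : ℕ => ℂ) 2 j).restrictScalars ℝ).hasFDerivAt.comp_hasDerivAt s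
    (hasDerivAt_timeEvolution_apply (Δ + MV - bondHopping n) δ₁ s)
  refine h.congr_deriv ?_
  change (-I • (Δ + MV - bondHopping n) _) j = _
  rw [lp.coeFn_smul, Pi.smul_apply, smul_eq_mul,
    decoupled_apply_of_le hMV (timeEvolution_decoupled_apply_mem hΔ hMV n s) hj, add_comm]

theorem norm_timeEvolution_decoupled_apply_le (hΔ : IsDirichletLaplacian Δ)
    (hMV : IsMulBy V MV) (n j : ℕ) {σ : ℝ} (hσ : 0 ≤ σ) :
    ‖timeEvolution (Δ + MV - bondHopping n) σ δ₁ j‖ ≤ expTail j (2 * σ) := by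
  set ψ := fun s => timeEvolution (Δ + MV - bondHopping n) s δ₁
  have hsa : IsSelfAdjoint (Δ + MV - bondHopping n) :=
    (hΔ.isSelfAdjoint.add hMV.isSelfAdjoint).sub (isSelfAdjoint_bondHopping n)
  have hcont : ∀ j, Continuous fun s => ψ s j := fun j =>
    (continuous_ℓ2_apply j).comp (continuous_timeEvolution_apply _ δ₁)
  have hcontΔ : ∀ j, Continuous fun s => Δ (ψ s) j := fun j =>
    (continuous_ℓ2_apply j).comp (Δ.continuous.comp (continuous_timeEvolution_apply _ δ₁))
  refine le_expTail_of_le_integral (f := fun j s => ‖ψ s j‖) (fun j => (hcont j).norm)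
    (fun j s _ => ?_) (fun j σ hσ => ?_) j hσ
  · calc ‖ψ s j‖ ≤ ‖ψ s‖ := lp.norm_apply_le_norm two_ne_zero _ j
      _ = 1 := by rw [norm_timeEvolution_apply hsa, norm_δ₁]
  have hint : 0 ≤ ∫ s in (0 : ℝ)..σ, (‖ψ s (j - 1)‖ + ‖ψ s (j + 1)‖) :=
    intervalIntegral.integral_nonneg hσ fun _ _ => by positivity
  rcases le_or_gt j n with hj | hj
  · have h0 : ‖ψ 0 j‖ = if j = 0 then 1 else 0 := by simp [ψ, δ₁_apply, apply_ite]
    calc ‖ψ σ j‖ ≤ ‖ψ 0 j‖ + ∫ s in (0 : ℝ)..σ, ‖Δ (ψ s) j‖ :=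
          norm_le_norm_zero_add_integral (hasDerivAt_timeEvolution_decoupled_apply hΔ hMV hj)
            (hcontΔ j) hσ
      _ ≤ _ := by
        rw [h0]
        gcongr
        exact intervalIntegral.integral_mono_on hσ ((hcontΔ j).norm.intervalIntegrable _ _)
          (((hcont _).norm.add (hcont _).norm).intervalIntegrable _ _)
          fun s _ => hΔ.norm_apply_le (ψ s) j
  · have : ψ σ j = 0 := timeEvolution_decoupled_apply_mem hΔ hMV n σ j hj
    simp only [this, norm_zero]
    positivity

theorem norm_timeEvolution_apply_sub_decoupled_le (hΔ : IsDirichletLaplacian Δ)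
    (hMV : IsMulBy V MV) (n : ℕ) {t : ℝ} (ht : 0 ≤ t) :
    ‖timeEvolution (Δ + MV) t δ₁ - timeEvolution (Δ + MV - bondHopping n) t δ₁‖
      ≤ expTail (n + 1) (2 * t) / 2 := by
  have hint := integral_two_mul_expTail (n + 1) t
  rw [intervalIntegral.integral_const_mul, expTail_zero_right, if_neg n.succ_ne_zero,
    sub_zero] at hint
  calc _ ≤ ∫ s in (0 : ℝ)..t,
        ‖(Δ + MV - (Δ + MV - bondHopping n)) (timeEvolution (Δ + MV - bondHopping n) s δ₁)‖ :=
        norm_timeEvolution_apply_sub_le (hΔ.isSelfAdjoint.add hMV.isSelfAdjoint) δ₁ ht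
    _ = ∫ s in (0 : ℝ)..t, ‖timeEvolution (Δ + MV - bondHopping n) s δ₁ n‖ := by
        simp only [sub_sub_cancel,
          norm_bondHopping_apply (timeEvolution_decoupled_apply_mem hΔ hMV n _)]
    _ ≤ ∫ s in (0 : ℝ)..t, expTail n (2 * s) :=
        intervalIntegral.integral_mono_on ht
          (((continuous_ℓ2_apply n).comp (continuous_timeEvolution_apply _ δ₁)).norm
            |>.intervalIntegrable _ _)
          (Continuous.intervalIntegrable (by fun_prop) _ _)
          fun s hs => norm_timeEvolution_decoupled_apply_le hΔ hMV n n hs.1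
    _ = expTail (n + 1) (2 * t) / 2 := by
        rw [Nat.add_sub_cancel] at hint
        linarith

theorem norm_inner_timeEvolution_sub_le (hΔ : IsDirichletLaplacian Δ) (hMV : IsMulBy V MV)
    (hMW : IsMulBy W MW) {n : ℕ} (hVW : ∀ j ≤ n, V j = W j) {t : ℝ} (ht : 0 ≤ t) :
    ‖inner ℂ δ₁ (timeEvolution (Δ + MV) t δ₁) - inner ℂ δ₁ (timeEvolution (Δ + MW) t δ₁)‖
      ≤ expTail (n + 1) (2 * t) := by
  have hV := norm_timeEvolution_apply_sub_decoupled_le hΔ hMV n ht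
  have hW := norm_timeEvolution_apply_sub_decoupled_le hΔ hMW n ht
  rw [timeEvolution_decoupled_apply_eq hΔ hMV hMW hVW t] at hV
  rw [norm_sub_rev] at hW
  rw [← inner_sub_right]
  calc _ ≤ ‖δ₁‖ * ‖timeEvolution (Δ + MV) t δ₁ - timeEvolution (Δ + MW) t δ₁‖ :=
        norm_inner_le_norm _ _
    _ ≤ expTail (n + 1) (2 * t) / 2 + expTail (n + 1) (2 * t) / 2 := by
        rw [norm_δ₁, one_mul]
        exact (norm_sub_le_norm_sub_add_norm_sub _ _ _).trans (add_le_add hV hW)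
    _ = expTail (n + 1) (2 * t) := add_halves _

end Decoupling

lemma IsMulBy.smul_add_of_isRankOneDelta {V : ℕ → ℝ} {B MV : ℓ2 →L[ℂ] ℓ2} (hMV : IsMulBy V MV)
    (hB : IsRankOneDelta B) (lam : ℝ) :
    IsMulBy (V + Pi.single 0 lam) ((lam : ℂ) • B + MV) := fun ψ j => by
  rw [add_apply, smul_apply, hB, lp.coeFn_add, Pi.add_apply, lp.coeFn_smul, Pi.smul_apply,
    lp.coeFn_smul, Pi.smul_apply, hMV, δ₁, lp.inner_single_left]
  rcases eq_or_ne j 0 with rfl | hj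
  · simp only [RCLike.inner_apply, map_one, mul_one, lp.single_apply, Pi.single_eq_same,
      smul_eq_mul, Pi.add_apply, Complex.ofReal_add]
    ring
  · simp [hj]

theorem norm_amplitude_sub_le {Δ B MV MW : ℓ2 →L[ℂ] ℓ2} {V W : ℕ → ℝ}
    (hΔ : IsDirichletLaplacian Δ) (hB : IsRankOneDelta B) (hMV : IsMulBy V MV)
    (hMW : IsMulBy W MW) {n : ℕ} (hVW : ∀ j ≤ n, V j = W j) (lam : ℝ) {t : ℝ} (ht : 0 ≤ t) :
    ‖inner ℂ δ₁ (exp ((-(t : ℂ) * I) • (Δ + (lam : ℂ) • B + MV)) δ₁)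
      - inner ℂ δ₁ (exp ((-(t : ℂ) * I) • (Δ + (lam : ℂ) • B + MW)) δ₁)‖
      ≤ expTail (n + 1) (2 * t) := by
  have h := norm_inner_timeEvolution_sub_le hΔ (hMV.smul_add_of_isRankOneDelta hB lam)
    (hMW.smul_add_of_isRankOneDelta hB lam)
    (n := n) (fun j hj => by simp [hVW j hj]) ht
  rwa [← add_assoc, ← add_assoc] at h

theorem large_amplitudes_survive_prefix_freezing_general
    (Δ B : ℓ2 →L[ℂ] ℓ2) (hΔ : IsDirichletLaplacian Δ) (hB : IsRankOneDelta B)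
    (V W : ℕ → ℝ)
    (MV MW : ℓ2 →L[ℂ] ℓ2) (hMV : IsMulBy V MV) (hMW : IsMulBy W MW)
    (N : ℕ) (hVW : ∀ n < N, V n = W n)
    (M T : ℝ)
    (k : ℕ) (ts : Fin k → ℝ) (hts : ∀ i, ts i ∈ Set.Ioc (0 : ℝ) T)
    (hamp : ∀ lam : ℝ, |lam| ≤ M → ∃ i : Fin k,
      (1 : ℝ) / 2 ≤
        ‖(inner ℂ δ₁ (exp ((-(ts i : ℂ) * Complex.I) • (Δ + (lam : ℂ) • B + MV)) δ₁) : ℂ)‖)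
    (ε : ℝ)
    (htail : 2 * ∑' m : {m : ℕ // N ≤ m}, ((2 + M) * T) ^ (m : ℕ) / (m : ℕ).factorial < ε) :
    ∀ lam : ℝ, |lam| ≤ M → ∃ i : Fin k,
      (1 : ℝ) / 2 - ε ≤
        ‖(inner ℂ δ₁ (exp ((-(ts i : ℂ) * Complex.I) • (Δ + (lam : ℂ) • B + MW)) δ₁) : ℂ)‖ := by
  change 2 * expTail N ((2 + M) * T) < ε at htail
  intro lam hlam
  obtain ⟨i, hi⟩ := hamp lam hlam
  refine ⟨i, ?_⟩
  obtain ⟨hti, hiT⟩ := hts i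
  have hM : 0 ≤ M := (abs_nonneg lam).trans hlam
  have hx : 2 * ts i ≤ (2 + M) * T := by nlinarith
  rcases N with _ | n
  · have : 1 ≤ expTail 0 ((2 + M) * T) := by
      rw [expTail_zero_left]
      exact Real.one_le_exp (by linarith)
    exact le_trans (by linarith) (norm_nonneg _)
  · have hdiff := (norm_sub_norm_le _ _).trans
      (norm_amplitude_sub_le hΔ hB hMV hMW (fun j hj => hVW j (Nat.lt_succ_of_le hj)) lam hti.le)
    have hmono := expTail_le_expTail (N := n + 1) (by positivity) hx
    linarith [expTail_nonneg (n + 1) (by positivity : 0 ≤ 2 * ts i)]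

/-- if `W` agrees with `V` on the first `N` sites, `t₁,…,t_k ∈ (0,T]`
are times such that for each `|λ| ≤ M` some `|⟨δ₁, e^{-it_iH_{V,λ}}δ₁⟩| ≥ 1/2`, and
`2∑_{m≥N}((2+M)T)^m/m! < ε`, then for each `|λ| ≤ M` some
`|⟨δ₁, e^{-it_iH_{W,λ}}δ₁⟩| ≥ 1/2 − ε`. -/
theorem large_amplitudes_survive_prefix_freezing
    (Δ B : ℓ2 →L[ℂ] ℓ2) (hΔ : IsDirichletLaplacian Δ) (hB : IsRankOneDelta B)
    (V W : ℕ → ℝ) (hVbdd : ∃ C, ∀ n, |V n| ≤ C) (hWbdd : ∃ C, ∀ n, |W n| ≤ C)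
    (MV MW : ℓ2 →L[ℂ] ℓ2) (hMV : IsMulBy V MV) (hMW : IsMulBy W MW)
    (N : ℕ) (hVW : ∀ n < N, V n = W n)
    (M T : ℝ) (hM : 0 < M) (hT : 0 < T)
    (k : ℕ) (ts : Fin k → ℝ) (hts : ∀ i, ts i ∈ Set.Ioc (0 : ℝ) T)
    (hamp : ∀ lam : ℝ, |lam| ≤ M → ∃ i : Fin k,
      (1 : ℝ) / 2 ≤
        ‖(inner ℂ δ₁ (exp ((-(ts i : ℂ) * Complex.I) • (Δ + (lam : ℂ) • B + MV)) δ₁) : ℂ)‖)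
    (ε : ℝ)
    (htail : 2 * ∑' m : {m : ℕ // N ≤ m}, ((2 + M) * T) ^ (m : ℕ) / (m : ℕ).factorial < ε) :
    ∀ lam : ℝ, |lam| ≤ M → ∃ i : Fin k,
      (1 : ℝ) / 2 - ε ≤
        ‖(inner ℂ δ₁ (exp ((-(ts i : ℂ) * Complex.I) • (Δ + (lam : ℂ) • B + MW)) δ₁) : ℂ)‖ :=
  large_amplitudes_survive_prefix_freezing_general Δ B hΔ hB V W MV MW hMV hMW N hVW M T k ts hts
    hamp ε htail

end
end
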